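/- arXiv:1102.5449 — 5 statements merged into one kernel-verified Lean document; each statement's English description precedes it below -/
import Mathlib

section
/- Let φ ⊆ A × B be a uniform relation and f : A → B a function with (a, f(a)) ∈ φ for all a ∈ A. Then for all a ∈ A and b ∈ B, (a,b) ∈ φ if and only if (f(a), b) ∈ E_B^φ. -/
def RComp {α β γ : Type*} (r : α → β → Prop) (s : β → γ → Prop) : α → γ → Prop :=
  fun a c => ∃ b, r a b ∧ s b c

def RInv {α β : Type*} (r : α → β → Prop) : β → α → Prop := fun b a => r a b

def Ker {α β : Type*} (φ : α → β → Prop) : α → α → Prop :=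
  fun a₁ a₂ => ∀ b, φ a₁ b ↔ φ a₂ b

def CoKer {α β : Type*} (φ : α → β → Prop) : β → β → Prop :=
  fun b₁ b₂ => ∀ a, φ a b₁ ↔ φ a b₂

def RComplete {α β : Type*} (φ : α → β → Prop) : Prop := ∀ a, ∃ b, φ a b

def RSurjective {α β : Type*} (φ : α → β → Prop) : Prop := ∀ b, ∃ a, φ a b

def PartialUniform {α β : Type*} (φ : α → β → Prop) : Prop :=
  ∀ a b, RComp (RComp φ (RInv φ)) φ a b → φ a b

def Uniform {α β : Type*} (φ : α → β → Prop) : Prop :=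
  RComplete φ ∧ RSurjective φ ∧ PartialUniform φ

theorem PartialUniform.coKer_of_rel {α β : Type*} {φ : α → β → Prop} (hφ : PartialUniform φ)
    {a : α} {b₁ b₂ : β} (h₁ : φ a b₁) (h₂ : φ a b₂) : CoKer φ b₁ b₂ := fun x =>
  ⟨fun hx => hφ x b₂ ⟨a, ⟨b₁, hx, h₁⟩, h₂⟩, fun hx => hφ x b₁ ⟨a, ⟨b₂, hx, h₂⟩, h₁⟩⟩

theorem stmt5_general {A B : Type*} (φ : A → B → Prop)
    (hφ : Uniform φ) (f : A → B) (hf : ∀ a, φ a (f a)) :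
    ∀ a b, φ a b ↔ CoKer φ (f a) b :=
  fun a _ => ⟨hφ.2.2.coKer_of_rel (hf a), fun h => (h a).mp (hf a)⟩

/-- For a uniform relation φ and a functional description f of φ:
(a,b) ∈ φ iff (f(a),b) ∈ E_B^φ. -/
theorem stmt5 {A B : Type*} [Nonempty A] [Nonempty B] (φ : A → B → Prop)
    (hφ : Uniform φ) (f : A → B) (hf : ∀ a, φ a (f a)) :
    ∀ a b, φ a b ↔ CoKer φ (f a) b :=
  stmt5_general φ hφ f hf
end

section
/- Given non-empty sets A, B, an equivalence E on A and an equivalence F on B, there exists a uniform relation φ ⊆ A × B with E_A^φ = E and E_B^φ = F if and only if there exists a bijection between the quotient sets A/E and B/F. -/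
/-!
The relation `φ` induces the bijection `[a] ↦ [b]` for any `b` with `φ a b`: for a uniform
relation, two related pairs `(a, b)` and `(a', b')` have kernel-equivalent first components
exactly when their second components are cokernel-equivalent. Conversely, a bijection
`e : A/E ≃ B/F` gives the uniform relation `e [a] = [b]`.
-/

section UniformRelation

variable {α β : Type*} {φ : α → β → Prop}

theorem PartialUniform.ker_of_rel (h : PartialUniform φ) {a a' : α} {b : β}
    (hab : φ a b) (hab' : φ a' b) : Ker φ a a' :=
  fun _ => ⟨fun hx => h _ _ ⟨a, ⟨b, hab', hab⟩, hx⟩, fun hx => h _ _ ⟨a', ⟨b, hab, hab'⟩, hx⟩⟩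

theorem PartialUniform.coKer_of_rel_s6 (h : PartialUniform φ) {a : α} {b b' : β}
    (hab : φ a b) (hab' : φ a b') : CoKer φ b b' :=
  fun _ => ⟨fun hx => h _ _ ⟨a, ⟨b, hx, hab⟩, hab'⟩, fun hx => h _ _ ⟨a, ⟨b', hx, hab'⟩, hab⟩⟩

theorem PartialUniform.ker_iff_coKer (h : PartialUniform φ) {a a' : α} {b b' : β}
    (hab : φ a b) (hab' : φ a' b') : Ker φ a a' ↔ CoKer φ b b' :=
  ⟨fun hK => h.coKer_of_rel_s6 ((hK b).1 hab) hab', fun hC => h.ker_of_rel ((hC a).1 hab) hab'⟩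

end UniformRelation

section EqRelation

variable {α β γ : Type*} {f : α → γ} {g : β → γ}

theorem uniform_eq_of_surjective (hf : f.Surjective) (hg : g.Surjective) :
    Uniform fun a b => f a = g b := by
  refine ⟨fun a => ?_, fun b => ?_, ?_⟩
  · obtain ⟨b, hb⟩ := hg (f a)
    exact ⟨b, hb.symm⟩
  · exact hf (g b)
  · rintro a b ⟨a', ⟨b', hab', ha'b'⟩, ha'b⟩
    exact hab'.trans (ha'b'.symm.trans ha'b)

theorem ker_eq_iff (hg : g.Surjective) {a a' : α} :
    Ker (fun a b => f a = g b) a a' ↔ f a = f a' := by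
  refine ⟨fun h => ?_, fun h _ => by simp only [h]⟩
  obtain ⟨b, hb⟩ := hg (f a)
  exact hb.symm.trans ((h b).1 hb.symm).symm

theorem coKer_eq_iff (hf : f.Surjective) {b b' : β} :
    CoKer (fun a b => f a = g b) b b' ↔ g b = g b' := by
  refine ⟨fun h => ?_, fun h _ => by simp only [h]⟩
  obtain ⟨a, ha⟩ := hf (g b)
  exact ha.symm.trans ((h a).1 ha)

end EqRelation

noncomputable def quotientEquivOfRel {α β : Type*} (s : Setoid α) (t : Setoid β)
    (R : α → β → Prop) (hcomp : RComplete R) (hsurj : RSurjective R)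
    (hR : ∀ {a a' b b'}, R a b → R a' b' → (s a a' ↔ t b b')) :
    Quotient s ≃ Quotient t where
  toFun := Quotient.lift (fun a => ⟦(hcomp a).choose⟧) fun _ _ h =>
    Quotient.sound ((hR (hcomp _).choose_spec (hcomp _).choose_spec).1 h)
  invFun := Quotient.lift (fun b => ⟦(hsurj b).choose⟧) fun _ _ h =>
    Quotient.sound ((hR (hsurj _).choose_spec (hsurj _).choose_spec).2 h)
  left_inv := Quotient.ind fun a =>
    Quotient.sound ((hR (hsurj _).choose_spec (hcomp a).choose_spec).2 (t.refl _))
  right_inv := Quotient.ind fun b =>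
    Quotient.sound ((hR (hcomp _).choose_spec (hsurj b).choose_spec).1 (s.refl _))

theorem stmt6_general {A B : Type*}
    (E : A → A → Prop) (F : B → B → Prop) (hE : Equivalence E) (hF : Equivalence F) :
    (∃ φ : A → B → Prop, Uniform φ ∧ (∀ a₁ a₂, Ker φ a₁ a₂ ↔ E a₁ a₂) ∧
      (∀ b₁ b₂, CoKer φ b₁ b₂ ↔ F b₁ b₂)) ↔
    Nonempty (Quotient (⟨E, hE⟩ : Setoid A) ≃ Quotient (⟨F, hF⟩ : Setoid B)) := by
  constructor
  · rintro ⟨φ, ⟨hcomp, hsurj, huni⟩, hker, hcoker⟩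
    exact ⟨quotientEquivOfRel _ _ φ hcomp hsurj fun hab hab' =>
      (hker _ _).symm.trans ((huni.ker_iff_coKer hab hab').trans (hcoker _ _))⟩
  · rintro ⟨e⟩
    have he : (e ∘ Quotient.mk _).Surjective := e.surjective.comp Quotient.mk_surjective
    refine ⟨fun a b => e ⟦a⟧ = ⟦b⟧, uniform_eq_of_surjective he Quotient.mk_surjective,
      fun a₁ a₂ => ?_, fun b₁ b₂ => ?_⟩
    · exact (ker_eq_iff Quotient.mk_surjective).trans (e.injective.eq_iff.trans Quotient.eq)
    · exact (coKer_eq_iff he).trans Quotient.eq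

/-- There is a uniform relation with kernel E and cokernel F iff the quotients
A/E and B/F are in bijection. -/
theorem stmt6 {A B : Type*} [Nonempty A] [Nonempty B]
    (E : A → A → Prop) (F : B → B → Prop) (hE : Equivalence E) (hF : Equivalence F) :
    (∃ φ : A → B → Prop, Uniform φ ∧ (∀ a₁ a₂, Ker φ a₁ a₂ ↔ E a₁ a₂) ∧
      (∀ b₁ b₂, CoKer φ b₁ b₂ ↔ F b₁ b₂)) ↔
    Nonempty (Quotient (⟨E, hE⟩ : Setoid A) ≃ Quotient (⟨F, hF⟩ : Setoid B)) :=
  stmt6_general E F hE hF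
end

section
/- If there exists at least one forward bisimulation between automata A and B, then there exists a greatest forward bisimulation between A and B, and this greatest forward bisimulation φ satisfies φ ∘ φ⁻¹ ∘ φ ⊆ φ (it is a partial uniform relation). -/
def SComp {α β : Type*} (s : Set α) (r : α → β → Prop) : Set β := {b | ∃ a ∈ s, r a b}

def CompS {α β : Type*} (r : α → β → Prop) (t : Set β) : Set α := {a | ∃ b, r a b ∧ b ∈ t}

/-- A nondeterministic automaton over alphabet X with state set S. -/
structure NA (X S : Type*) where
  delta : X → S → S → Prop
  init : Set S
  term : Set S

/-- φ is a forward simulation from A to B. -/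
def FwdSim {X S T : Type*} (A : NA X S) (B : NA X T) (φ : S → T → Prop) : Prop :=
  (∃ a b, φ a b) ∧
  A.init ⊆ SComp B.init (RInv φ) ∧
  (∀ x b a, RComp (RInv φ) (A.delta x) b a → RComp (B.delta x) (RInv φ) b a) ∧
  CompS (RInv φ) A.term ⊆ B.term

/-- φ is a backward simulation from A to B. -/
def BwdSim {X S T : Type*} (A : NA X S) (B : NA X T) (φ : S → T → Prop) : Prop :=
  (∃ a b, φ a b) ∧
  SComp A.init φ ⊆ B.init ∧
  (∀ x a b, RComp (A.delta x) φ a b → RComp φ (B.delta x) a b) ∧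
  A.term ⊆ CompS φ B.term

/-- φ is a forward bisimulation: both φ and φ⁻¹ are forward simulations. -/
def FwdBisim {X S T : Type*} (A : NA X S) (B : NA X T) (φ : S → T → Prop) : Prop :=
  FwdSim A B φ ∧ FwdSim B A (RInv φ)

/-- φ is a backward bisimulation: both φ and φ⁻¹ are backward simulations. -/
def BwdBisim {X S T : Type*} (A : NA X S) (B : NA X T) (φ : S → T → Prop) : Prop :=
  BwdSim A B φ ∧ BwdSim B A (RInv φ)

theorem rInv_rComp {α β γ : Type*} (r : α → β → Prop) (s : β → γ → Prop) :
    RInv (RComp r s) = RComp (RInv s) (RInv r) := by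
  funext c a
  exact propext ⟨fun ⟨b, hab, hbc⟩ => ⟨b, hbc, hab⟩, fun ⟨b, hbc, hab⟩ => ⟨b, hab, hbc⟩⟩

section Simulation

variable {X S T U ι : Type*} {A : NA X S} {B : NA X T} {C : NA X U}

theorem FwdSim.comp {φ : S → T → Prop} {ψ : T → U → Prop} (hφ : FwdSim A B φ)
    (hψ : FwdSim B C ψ) (hne : ∃ a c, RComp φ ψ a c) : FwdSim A C (RComp φ ψ) := by
  obtain ⟨-, hφi, hφd, hφt⟩ := hφ
  obtain ⟨-, hψi, hψd, hψt⟩ := hψ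
  refine ⟨hne, fun a ha => ?_, fun x c a' ⟨a, ⟨b, hab, hbc⟩, haa'⟩ => ?_,
    fun c ⟨a, ⟨b, hab, hbc⟩, ha⟩ => hψt ⟨b, hbc, hφt ⟨a, hab, ha⟩⟩⟩
  · obtain ⟨b, hb, hab⟩ := hφi ha
    obtain ⟨c, hc, hbc⟩ := hψi hb
    exact ⟨c, hc, b, hab, hbc⟩
  · obtain ⟨b', hbb', hab'⟩ := hφd x b a' ⟨a, hab, haa'⟩
    obtain ⟨c', hcc', hbc'⟩ := hψd x c b' ⟨b, hbc, hbb'⟩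
    exact ⟨c', hcc', b', hab', hbc'⟩

theorem FwdSim.iUnion [Nonempty ι] {φ : ι → S → T → Prop} (h : ∀ i, FwdSim A B (φ i)) :
    FwdSim A B (fun a b => ∃ i, φ i a b) := by
  refine ⟨?_, fun a ha => ?_, fun x b a' ⟨a, ⟨i, hab⟩, haa'⟩ => ?_,
    fun b ⟨a, ⟨i, hab⟩, ha⟩ => (h i).2.2.2 ⟨a, hab, ha⟩⟩
  · obtain ⟨a, b, hab⟩ := (h (Classical.arbitrary ι)).1
    exact ⟨a, b, _, hab⟩
  · obtain ⟨b, hb, hab⟩ := (h (Classical.arbitrary ι)).2.1 ha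
    exact ⟨b, hb, _, hab⟩
  · obtain ⟨b', hbb', hab'⟩ := (h i).2.2.1 x b a' ⟨a, hab, haa'⟩
    exact ⟨b', hbb', i, hab'⟩

theorem FwdBisim.symm {φ : S → T → Prop} (h : FwdBisim A B φ) : FwdBisim B A (RInv φ) :=
  ⟨h.2, h.1⟩

theorem FwdBisim.comp {φ : S → T → Prop} {ψ : T → U → Prop} (hφ : FwdBisim A B φ)
    (hψ : FwdBisim B C ψ) (hne : ∃ a c, RComp φ ψ a c) : FwdBisim A C (RComp φ ψ) := by
  refine ⟨hφ.1.comp hψ.1 hne, ?_⟩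
  rw [rInv_rComp]
  obtain ⟨a, c, b, hab, hbc⟩ := hne
  exact hψ.2.comp hφ.2 ⟨c, a, b, hbc, hab⟩

theorem FwdBisim.iUnion [Nonempty ι] {φ : ι → S → T → Prop} (h : ∀ i, FwdBisim A B (φ i)) :
    FwdBisim A B (fun a b => ∃ i, φ i a b) :=
  ⟨FwdSim.iUnion fun i => (h i).1, FwdSim.iUnion fun i => (h i).2⟩

theorem FwdBisim.rComp_rInv_rComp {φ : S → T → Prop} (h : FwdBisim A B φ) :
    FwdBisim A B (RComp (RComp φ (RInv φ)) φ) := by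
  obtain ⟨a, b, hab⟩ := h.1.1
  exact (h.comp h.symm ⟨a, a, b, hab, hab⟩).comp h ⟨a, b, a, ⟨b, hab, hab⟩, hab⟩

def greatestFwdBisim (A : NA X S) (B : NA X T) : S → T → Prop :=
  fun a b => ∃ φ : {φ : S → T → Prop // FwdBisim A B φ}, φ.1 a b

theorem le_greatestFwdBisim {φ : S → T → Prop} (h : FwdBisim A B φ) {a : S} {b : T}
    (hab : φ a b) : greatestFwdBisim A B a b :=
  ⟨⟨φ, h⟩, hab⟩

theorem fwdBisim_greatestFwdBisim (h : ∃ φ : S → T → Prop, FwdBisim A B φ) :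
    FwdBisim A B (greatestFwdBisim A B) :=
  have : Nonempty {φ : S → T → Prop // FwdBisim A B φ} := nonempty_subtype.2 h
  FwdBisim.iUnion fun φ => φ.2

end Simulation

/-- If some forward bisimulation between A and B exists, then there is a
greatest one, and it is a partial uniform relation. -/
theorem stmt13 {X S T : Type*} (A : NA X S) (B : NA X T)
    (h : ∃ φ : S → T → Prop, FwdBisim A B φ) :
    ∃ φ : S → T → Prop, FwdBisim A B φ ∧
      (∀ ψ : S → T → Prop, FwdBisim A B ψ → ∀ a b, ψ a b → φ a b) ∧
      (∀ a b, RComp (RComp φ (RInv φ)) φ a b → φ a b) := by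
  have hmax := fwdBisim_greatestFwdBisim h
  exact ⟨greatestFwdBisim A B, hmax, fun ψ hψ _ _ => le_greatestFwdBisim hψ,
    fun _ _ => le_greatestFwdBisim hmax.rComp_rInv_rComp⟩
end

section
/- Let A be an automaton with states A, let E be an equivalence on A, and let φ_E ⊆ A × (A/E) be the graph of the natural quotient map a ↦ E_a. Then φ_E is both a forward simulation and a backward simulation from A to the factor automaton A/E; moreover, φ_E is a forward bisimulation if and only if E is a forward bisimulation on A. -/
/-- The factor automaton of A with respect to a setoid s on its states. -/
def factor {X S : Type*} (A : NA X S) (s : Setoid S) : NA X (Quotient s) where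
  delta x q₁ q₂ := ∃ a₁ a₂, Quotient.mk s a₁ = q₁ ∧ Quotient.mk s a₂ = q₂ ∧
    ∃ a₁' a₂', s.r a₁ a₁' ∧ A.delta x a₁' a₂' ∧ s.r a₂' a₂
  init := {q | ∃ a, Quotient.mk s a = q ∧ ∃ a', a' ∈ A.init ∧ s.r a' a}
  term := {q | ∃ a, Quotient.mk s a = q ∧ ∃ a', s.r a a' ∧ a' ∈ A.term}

/-!
A transition `E_a → E_b` of `A/E` is exactly an `E ∘ δ ∘ E`-step from `a` to `b`, and `E_a` is
initial (terminal) iff `a ∈ σ ∘ E` (`a ∈ E ∘ τ`). Reflexivity of `E` then gives every inclusion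
required of `φ_E` as a forward and as a backward simulation, while for `φ_E⁻¹` the inclusions
reduce to `E ∘ δ ⊆ δ ∘ E` and `E ∘ τ ⊆ τ`, the converse `τ ⊆ E ∘ τ` being free.
-/

namespace NA

variable {X S : Type*}

/-- The relation `φ_E` of the paper. -/
def quotientMkGraph (s : Setoid S) : S → Quotient s → Prop :=
  fun a q => Quotient.mk s a = q

variable (A : NA X S) (s : Setoid S)

theorem factor_delta_mk_iff {x : X} {a b : S} :
    (factor A s).delta x (Quotient.mk s a) (Quotient.mk s b) ↔
      ∃ a' b', s.r a a' ∧ A.delta x a' b' ∧ s.r b' b := by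
  constructor
  · rintro ⟨a₁, b₁, ha, hb, a', b', ha', hd, hb'⟩
    exact ⟨a', b', s.trans (Quotient.exact ha.symm) ha', hd,
      s.trans hb' (Quotient.exact hb)⟩
  · rintro ⟨a', b', ha', hd, hb'⟩
    exact ⟨a, b, rfl, rfl, a', b', ha', hd, hb'⟩

theorem factor_init_mk_iff {a : S} :
    Quotient.mk s a ∈ (factor A s).init ↔ ∃ a', a' ∈ A.init ∧ s.r a' a := by
  constructor
  · rintro ⟨a₁, ha, a', hinit, ha'⟩
    exact ⟨a', hinit, s.trans ha' (Quotient.exact ha)⟩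
  · exact fun h => ⟨a, rfl, h⟩

theorem factor_term_mk_iff {a : S} :
    Quotient.mk s a ∈ (factor A s).term ↔ ∃ a', s.r a a' ∧ a' ∈ A.term := by
  constructor
  · rintro ⟨a₁, ha, a', ha', hterm⟩
    exact ⟨a', s.trans (Quotient.exact ha.symm) ha', hterm⟩
  · exact fun h => ⟨a, rfl, h⟩

theorem fwdSim_factor [Nonempty S] : FwdSim A (factor A s) (quotientMkGraph s) := by
  obtain ⟨a₀⟩ := ‹Nonempty S›
  refine ⟨⟨a₀, _, rfl⟩, ?_, ?_, ?_⟩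
  · exact fun a ha => ⟨_, (factor_init_mk_iff A s).2 ⟨a, ha, s.refl a⟩, rfl⟩
  · rintro x _ b ⟨a, rfl, hd⟩
    exact ⟨_, (factor_delta_mk_iff A s).2 ⟨a, b, s.refl a, hd, s.refl b⟩, rfl⟩
  · rintro _ ⟨a, rfl, ha⟩
    exact (factor_term_mk_iff A s).2 ⟨a, s.refl a, ha⟩

theorem bwdSim_factor [Nonempty S] : BwdSim A (factor A s) (quotientMkGraph s) := by
  obtain ⟨a₀⟩ := ‹Nonempty S›
  refine ⟨⟨a₀, _, rfl⟩, ?_, ?_, ?_⟩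
  · rintro _ ⟨a, ha, rfl⟩
    exact (factor_init_mk_iff A s).2 ⟨a, ha, s.refl a⟩
  · rintro x a _ ⟨b, hd, rfl⟩
    exact ⟨_, rfl, (factor_delta_mk_iff A s).2 ⟨a, b, s.refl a, hd, s.refl b⟩⟩
  · exact fun a ha => ⟨_, rfl, (factor_term_mk_iff A s).2 ⟨a, s.refl a, ha⟩⟩

/-- The left side says `s ∘ δ ∘ s ⊆ δ ∘ s`, which by reflexivity and transitivity of `s`
is `s ∘ δ ⊆ δ ∘ s`. -/
theorem factor_inv_delta_iff :
    (∀ x a q, RComp (quotientMkGraph s) ((factor A s).delta x) a q →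
        RComp (A.delta x) (quotientMkGraph s) a q) ↔
      ∀ x a b, RComp s.r (A.delta x) a b → RComp (A.delta x) s.r a b := by
  constructor
  · rintro h x a b ⟨a', ha', hd⟩
    obtain ⟨c, hc, hcb⟩ := h x a (Quotient.mk s b)
      ⟨_, rfl, (factor_delta_mk_iff A s).2 ⟨a', b, ha', hd, s.refl b⟩⟩
    exact ⟨c, hc, Quotient.exact hcb⟩
  · rintro h x a q ⟨_, rfl, hq⟩
    induction q using Quotient.ind with
    | _ b =>
      obtain ⟨a', b', ha', hd, hb'⟩ := (factor_delta_mk_iff A s).1 hq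
      obtain ⟨c, hc, hcb'⟩ := h x a b' ⟨a', ha', hd⟩
      exact ⟨c, hc, Quotient.sound (s.trans hcb' hb')⟩

theorem factor_inv_term_iff :
    CompS (quotientMkGraph s) (factor A s).term ⊆ A.term ↔
      ∀ a, (∃ a', s.r a a' ∧ a' ∈ A.term) ↔ a ∈ A.term := by
  constructor
  · exact fun h a => ⟨fun ha => h ⟨_, rfl, (factor_term_mk_iff A s).2 ha⟩,
      fun ha => ⟨a, s.refl a, ha⟩⟩
  · rintro h a ⟨_, rfl, ha⟩
    exact (h a).1 ((factor_term_mk_iff A s).1 ha)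

theorem fwdSim_factor_inv_iff [Nonempty S] :
    FwdSim (factor A s) A (RInv (quotientMkGraph s)) ↔
      (∀ x a b, RComp s.r (A.delta x) a b → RComp (A.delta x) s.r a b) ∧
        ∀ a, (∃ a', s.r a a' ∧ a' ∈ A.term) ↔ a ∈ A.term := by
  obtain ⟨a₀⟩ := ‹Nonempty S›
  have hinit : (factor A s).init ⊆ SComp A.init (RInv (RInv (quotientMkGraph s))) := by
    rintro _ ⟨a, rfl, a', ha', haa'⟩
    exact ⟨a', ha', Quotient.sound haa'⟩
  rw [← factor_inv_delta_iff, ← factor_inv_term_iff]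
  exact ⟨fun ⟨_, _, hd, ht⟩ => ⟨hd, ht⟩,
    fun ⟨hd, ht⟩ => ⟨⟨_, a₀, rfl⟩, hinit, hd, ht⟩⟩

end NA

/-- The graph of the natural map onto the factor automaton is both a forward and
a backward simulation, and it is a forward bisimulation iff E is a forward
bisimulation on A. -/
theorem stmt17 {X S : Type*} [Nonempty S] (A : NA X S) (E : S → S → Prop)
    (hE : Equivalence E) :
    FwdSim A (factor A ⟨E, hE⟩) (fun a q => Quotient.mk ⟨E, hE⟩ a = q) ∧
    BwdSim A (factor A ⟨E, hE⟩) (fun a q => Quotient.mk ⟨E, hE⟩ a = q) ∧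
    (FwdBisim A (factor A ⟨E, hE⟩) (fun a q => Quotient.mk ⟨E, hE⟩ a = q) ↔
      ((∀ x a b, RComp E (A.delta x) a b → RComp (A.delta x) E a b) ∧
       (∀ a, (∃ a', E a a' ∧ a' ∈ A.term) ↔ a ∈ A.term))) :=
  ⟨A.fwdSim_factor _, A.bwdSim_factor _,
    (and_iff_right (A.fwdSim_factor _)).trans (A.fwdSim_factor_inv_iff _)⟩
end

section
/- Let A be an automaton. The set of weak forward bisimulation equivalences on A (equivalences E with E ∘ τ_u ⊆ τ_u for every word u) is exactly the principal ideal (down-set) of the lattice of equivalences on A generated by the equivalence E^wfb defined by (a,a') ∈ E^wfb iff for every word u, a ∈ τ_u ↔ a' ∈ τ_u. In particular E^wfb itself is a weak forward bisimulation equivalence, and an equivalence E satisfies E ∘ τ_u ⊆ τ_u for all u iff E ⊆ E^wfb. -/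
/-- τ_u: the set of states from which the word u leads to a terminal state. -/
def tauW {X S : Type*} (A : NA X S) : List X → Set S
  | [] => A.term
  | x :: u => {a | ∃ b, A.delta x a b ∧ b ∈ tauW A u}

/-- The greatest weak forward bisimulation equivalence on A. -/
def Ewfb {X S : Type*} (A : NA X S) : S → S → Prop :=
  fun a a' => ∀ u : List X, a ∈ tauW A u ↔ a' ∈ tauW A u

section SaturatedRelation

variable {ι S : Type*} (t : ι → Set S)

theorem equivalence_forall_mem_iff_mem :
    Equivalence fun a a' : S => ∀ i, a ∈ t i ↔ a' ∈ t i :=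
  ⟨fun _ _ => Iff.rfl, fun h i => (h i).symm, fun h₁ h₂ i => (h₁ i).trans (h₂ i)⟩

theorem forall_setOf_rel_subset_iff {E : S → S → Prop}
    (hE : ∀ {a a'}, E a a' → E a' a) :
    (∀ i, {a | ∃ a', E a a' ∧ a' ∈ t i} ⊆ t i) ↔
      ∀ a a', E a a' → ∀ i, a ∈ t i ↔ a' ∈ t i := by
  constructor
  · intro hsat a a' haa' i
    exact ⟨fun ha => hsat i ⟨a, hE haa', ha⟩, fun ha' => hsat i ⟨a', haa', ha'⟩⟩
  · rintro hmem i a ⟨a', haa', ha'⟩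
    exact (hmem a a' haa' i).mpr ha'

end SaturatedRelation

/-- The weak forward bisimulation equivalences on A form exactly the principal
down-set of the lattice of equivalences generated by E^wfb. -/
theorem stmt19 {X S : Type*} (A : NA X S) :
    Equivalence (Ewfb A) ∧
    (∀ u : List X, {a | ∃ a', Ewfb A a a' ∧ a' ∈ tauW A u} ⊆ tauW A u) ∧
    (∀ E : S → S → Prop, Equivalence E →
      ((∀ u : List X, {a | ∃ a', E a a' ∧ a' ∈ tauW A u} ⊆ tauW A u) ↔
        (∀ a a', E a a' → Ewfb A a a'))) := by
  have hEquiv : Equivalence (Ewfb A) := equivalence_forall_mem_iff_mem (tauW A)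
  have hDownSet : ∀ E : S → S → Prop, Equivalence E →
      ((∀ u : List X, {a | ∃ a', E a a' ∧ a' ∈ tauW A u} ⊆ tauW A u) ↔
        (∀ a a', E a a' → Ewfb A a a')) :=
    fun _ hE => forall_setOf_rel_subset_iff (tauW A) hE.symm
  exact ⟨hEquiv, (hDownSet _ hEquiv).mpr fun _ _ => id, hDownSet⟩
end
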